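/- Fix a set L ⊆ Fin m of lout turns. In the mixed game, the preference at turn t is the lout order <L_{P t} if t ∈ L, and is some fixed strict partial order extending the knight order <K_{P t} if t ∉ L. Let σ be the permutation of Fin m that lists the turns of L in increasing order followed by the turns not in L in decreasing order, and consider the all-lout game with turn order P ∘ σ; let b be its greedy play. Then all optimal plays of the mixed game lead to the same division of food, namely: for every optimal play a of the mixed game and every player i, the plate A_i(a) computed with turn order P equals the plate of player i under b computed with turn order P ∘ σ. -/

import Mathlib

/-- The plate of player `i` under play sequence `a`, with turn order `P`. -/
def plate {M : Type*} [DecidableEq M] {m k : ℕ} (P : Fin m → Fin k) (a : Fin m → M)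
    (i : Fin k) : Finset M :=
  (Finset.univ.filter fun t => P t = i).image a

/-- Pairwise comparison of plates with respect to a morsel ordering `le`. -/
def PlateLE {M : Type*} (le : M → M → Prop) (A B : Finset M) : Prop :=
  ∃ f : A → B, Function.Bijective f ∧ ∀ x : A, le x.1 (f x).1

/-- Strict pairwise comparison of plates. -/
def PlateLT {M : Type*} (le : M → M → Prop) (A B : Finset M) : Prop :=
  PlateLE le A B ∧ A ≠ B

/-- The knight order of player `i` on play sequences. -/
def KnightLT {M : Type*} [DecidableEq M] {m k : ℕ} (P : Fin m → Fin k)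
    (ord : Fin k → LinearOrder M) (i : Fin k) (a b : Fin m → M) : Prop :=
  ((∀ j, j ≠ i → PlateLE (ord j).le (plate P a j) (plate P b j)) ∧
      ∃ j, j ≠ i ∧ PlateLT (ord j).le (plate P a j) (plate P b j)) ∨
    ((∀ j, j ≠ i → plate P a j = plate P b j) ∧
      PlateLT (ord i).le (plate P a i) (plate P b i))

/-- The lout order of player `i` on play sequences. -/
def LoutLT {M : Type*} {m k : ℕ} (P : Fin m → Fin k)
    (ord : Fin k → LinearOrder M) (i : Fin k) (a b : Fin m → M) : Prop :=
  ∃ t : Fin m, P t = i ∧ (∀ s : Fin m, s < t → a s = b s) ∧ (ord i).lt (a t) (b t)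

/-- A strategy profile: assigns to each duplicate-free history of length `< m` a
morsel not occurring in it. -/
structure Strategy (M : Type*) (m : ℕ) where
  choice : List M → M
  valid : ∀ h : List M, h.Nodup → h.length < m → choice h ∉ h

/-- Iteratively extend a history by the choices prescribed by `s`. -/
def Strategy.extend {M : Type*} {m : ℕ} (s : Strategy M m) : ℕ → List M → List M
  | 0, h => h
  | j + 1, h => Strategy.extend s j (h ++ [s.choice h])

/-- The contingent outcome of strategy profile `s` from history `h`, as a play
sequence. -/
def Strategy.play {M : Type*} {m : ℕ} (s : Strategy M m) (h : List M) : Fin m → M :=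
  fun t => (s.extend (m - h.length) h).getD t.val (s.choice [])

/-- Subgame perfect equilibrium with respect to preferences `pref t` at turn `t`. -/
def SPE {M : Type*} {m : ℕ}
    (pref : Fin m → (Fin m → M) → (Fin m → M) → Prop) (s : Strategy M m) : Prop :=
  ∀ t : Fin m, ∀ h : List M, h.Nodup → h.length = t.val →
    ∀ x : M, x ∉ h → ¬ pref t (s.play h) (s.play (h ++ [x]))

/-- Optimal plays: contingent outcomes of subgame perfect equilibria from the
empty history. -/
def OptimalPlay {M : Type*} {m : ℕ}
    (pref : Fin m → (Fin m → M) → (Fin m → M) → Prop) (a : Fin m → M) : Prop :=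
  ∃ s : Strategy M m, SPE pref s ∧ a = s.play []

/-- The greedy play: at each turn `t` the mover `P t` selects her favourite
remaining morsel. -/
def IsGreedy {M : Type*} {m k : ℕ} (P : Fin m → Fin k) (ord : Fin k → LinearOrder M)
    (a : Fin m → M) : Prop :=
  Function.Injective a ∧
    ∀ t : Fin m, ∀ x : M, (∀ s : Fin m, s < t → a s ≠ x) → x ≠ a t →
      (ord (P t)).lt x (a t)

section PlateLE
variable {M : Type*} [DecidableEq M] {le : M → M → Prop} {A B C : Finset M}

lemma plateLE_iff : PlateLE le A B ↔
    ∃ g : M → M, Set.InjOn g A ∧ Finset.image g A = B ∧ ∀ x ∈ A, le x (g x) := by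
  classical
  constructor
  · rintro ⟨f, hbij, hle⟩
    refine ⟨fun x => if h : x ∈ A then (f ⟨x, h⟩).1 else x, ?_, ?_, ?_⟩
    · intro x hx y hy hxy
      dsimp only at hxy
      rw [dif_pos (by exact_mod_cast hx : x ∈ A), dif_pos (by exact_mod_cast hy : y ∈ A)] at hxy
      have := hbij.1 (Subtype.ext hxy)
      exact congrArg Subtype.val this
    · apply Finset.Subset.antisymm
      · intro z hz
        simp only [Finset.mem_image] at hz
        obtain ⟨x, hx, hxz⟩ := hz
        rw [dif_pos hx] at hxz
        rw [← hxz]; exact (f ⟨x, hx⟩).2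
      · intro z hz
        obtain ⟨x, hx⟩ := hbij.2 ⟨z, hz⟩
        refine Finset.mem_image.2 ⟨x.1, x.2, ?_⟩
        rw [dif_pos x.2, hx]
    · intro x hx; dsimp only; rw [dif_pos hx]; exact hle ⟨x, hx⟩
  · rintro ⟨g, hinj, himg, hle⟩
    refine ⟨fun x => ⟨g x.1, himg ▸ Finset.mem_image_of_mem g x.2⟩, ⟨?_, ?_⟩, fun x => hle x.1 x.2⟩
    · intro x y hxy
      exact Subtype.ext (hinj (by exact_mod_cast x.2) (by exact_mod_cast y.2)
        (congrArg Subtype.val hxy))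
    · rintro ⟨z, hz⟩
      rw [← himg] at hz
      obtain ⟨x, hx, hxz⟩ := Finset.mem_image.1 hz
      exact ⟨⟨x, hx⟩, Subtype.ext hxz⟩

lemma plateLE_refl (hrefl : ∀ x, le x x) (A : Finset M) : PlateLE le A A :=
  plateLE_iff.2 ⟨id, fun x _ y _ h => h, Finset.image_id, fun x _ => hrefl x⟩

lemma PlateLE.card_eq (h : PlateLE le A B) : A.card = B.card := by
  obtain ⟨g, hinj, himg, _⟩ := plateLE_iff.1 h
  rw [← himg, Finset.card_image_of_injOn hinj]

lemma plateLE_insert {a b : M} (ha : a ∉ A) (hb : b ∉ B) (hab : le a b)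
    (h : PlateLE le A B) : PlateLE le (insert a A) (insert b B) := by
  classical
  obtain ⟨g, hinj, himg, hle⟩ := plateLE_iff.1 h
  have hgB : ∀ x ∈ A, g x ∈ B := fun x hx => himg ▸ Finset.mem_image_of_mem g hx
  refine plateLE_iff.2 ⟨fun x => if x = a then b else g x, ?_, ?_, ?_⟩
  · intro x hx y hy hxy
    simp only [Finset.coe_insert, Set.mem_insert_iff, Finset.mem_coe] at hx hy
    dsimp only at hxy
    by_cases hxa : x = a <;> by_cases hya : y = a
    · rw [hxa, hya]
    · rw [if_pos hxa, if_neg hya] at hxy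
      exact absurd (hxy ▸ hgB y (hy.resolve_left hya)) hb
    · rw [if_neg hxa, if_pos hya] at hxy
      exact absurd (hxy ▸ hgB x (hx.resolve_left hxa)) hb
    · rw [if_neg hxa, if_neg hya] at hxy
      exact hinj (hx.resolve_left hxa) (hy.resolve_left hya) hxy
  · rw [Finset.image_insert, if_pos rfl]
    congr 1
    rw [← himg]
    apply Finset.image_congr
    intro x hx
    have hne : x ≠ a := fun hxa => ha (by rw [← hxa]; exact hx)
    exact if_neg hne
  · intro x hx
    dsimp only
    rcases Finset.mem_insert.1 hx with hxa | hxA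
    · rw [if_pos hxa, hxa]; exact hab
    · have hne : x ≠ a := fun hxa => ha (by rw [← hxa]; exact hxA)
      rw [if_neg hne]; exact hle x hxA

lemma plateLE_union (hrefl : ∀ x, le x x) (hCA : Disjoint C A) (hCB : Disjoint C B)
    (h : PlateLE le A B) : PlateLE le (A ∪ C) (B ∪ C) := by
  classical
  obtain ⟨g, hinj, himg, hle⟩ := plateLE_iff.1 h
  have hgB : ∀ x ∈ A, g x ∈ B := fun x hx => himg ▸ Finset.mem_image_of_mem g hx
  refine plateLE_iff.2 ⟨fun x => if x ∈ A then g x else x, ?_, ?_, ?_⟩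
  · intro x hx y hy hxy
    simp only [Finset.coe_union, Set.mem_union, Finset.mem_coe] at hx hy
    dsimp only at hxy
    by_cases hxa : x ∈ A <;> by_cases hya : y ∈ A
    · rw [if_pos hxa, if_pos hya] at hxy; exact hinj hxa hya hxy
    · rw [if_pos hxa, if_neg hya] at hxy
      exact absurd (hgB x hxa) (fun hB =>
        (Finset.disjoint_left.1 hCB) (hxy ▸ hy.resolve_left hya) hB)
    · rw [if_neg hxa, if_pos hya] at hxy
      exact absurd (hgB y hya) (fun hB =>
        (Finset.disjoint_left.1 hCB) (hxy ▸ hx.resolve_left hxa) hB)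
    · rw [if_neg hxa, if_neg hya] at hxy; exact hxy
  · rw [Finset.image_union]
    congr 1
    · rw [← himg]; apply Finset.image_congr; intro x hx; exact if_pos hx
    · apply Finset.Subset.antisymm
      · intro z hz
        obtain ⟨x, hx, hxz⟩ := Finset.mem_image.1 hz
        rw [if_neg (Finset.disjoint_left.1 hCA hx)] at hxz
        exact hxz ▸ hx
      · intro z hz
        refine Finset.mem_image.2 ⟨z, hz, ?_⟩
        rw [if_neg (Finset.disjoint_left.1 hCA hz)]
  · intro x _
    dsimp only
    by_cases hxa : x ∈ A
    · rw [if_pos hxa]; exact hle x hxa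
    · rw [if_neg hxa]; exact hrefl x

end PlateLE
section Greedy
variable {M : Type*} [DecidableEq M] {k : ℕ} (ord : Fin k → LinearOrder M)

/-- favourite remaining morsel of player `j` in pool `S`. -/
def pk (j : Fin k) (S : Finset M) (h : S.Nonempty) : M := @Finset.max' M (ord j) S h

lemma pk_mem {j : Fin k} {S : Finset M} (h : S.Nonempty) : pk ord j S h ∈ S :=
  @Finset.max'_mem M (ord j) S h

lemma pk_le {j : Fin k} {S : Finset M} (h : S.Nonempty) {x : M} (hx : x ∈ S) :
    (ord j).le x (pk ord j S h) := @Finset.le_max' M (ord j) S x hx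

lemma ord_le_refl (j : Fin k) (x : M) : (ord j).le x x := by
  letI := ord j; exact le_refl x

lemma pk_erase {j : Fin k} {S : Finset M} {x : M} (hS : S.Nonempty)
    (hmem : pk ord j S hS ∈ S.erase x) :
    pk ord j (S.erase x) ⟨_, hmem⟩ = pk ord j S hS := by
  letI := ord j
  apply le_antisymm
  · exact Finset.max'_le _ _ _ (fun y hy => Finset.le_max' _ _ (Finset.mem_of_mem_erase hy))
  · exact Finset.le_max' _ _ hmem

lemma pk_proof_irrel {j : Fin k} {S : Finset M} (h h' : S.Nonempty) :
    pk ord j S h = pk ord j S h' := rfl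

/-- the greedy play for schedule `q` on pool `S`. -/
def gr : List (Fin k) → Finset M → List M
  | [], _ => []
  | j :: q, S =>
    if h : S.Nonempty then pk ord j S h :: gr q (S.erase (pk ord j S h)) else []

lemma gr_nil (S : Finset M) : gr ord [] S = [] := rfl

lemma gr_cons {j : Fin k} {q : List (Fin k)} {S : Finset M} (h : S.Nonempty) :
    gr ord (j :: q) S = pk ord j S h :: gr ord q (S.erase (pk ord j S h)) := by
  rw [gr, dif_pos h]

lemma gr_length : ∀ (q : List (Fin k)) (S : Finset M), q.length ≤ S.card →
    (gr ord q S).length = q.length := by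
  intro q
  induction q with
  | nil => intro S _; rfl
  | cons j q ih =>
    intro S hc
    have hS : S.Nonempty := Finset.card_pos.1 (lt_of_lt_of_le (Nat.succ_pos _) hc)
    rw [gr_cons ord hS]
    simp only [List.length_cons]
    rw [ih (S.erase (pk ord j S hS)) ?_]
    rw [Finset.card_erase_of_mem (pk_mem ord hS)]
    simpa using Nat.le_sub_one_of_lt (lt_of_lt_of_le (Nat.lt_succ_self _) hc)

lemma gr_mem_subset : ∀ (q : List (Fin k)) (S : Finset M) {x : M}, x ∈ gr ord q S → x ∈ S := by
  intro q
  induction q with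
  | nil => intro S x hx; simp [gr_nil] at hx
  | cons j q ih =>
    intro S x hx
    by_cases hS : S.Nonempty
    · rw [gr_cons ord hS] at hx
      rcases List.mem_cons.1 hx with h | h
      · rw [h]; exact pk_mem ord hS
      · exact Finset.mem_of_mem_erase (ih _ h)
    · rw [gr, dif_neg hS] at hx; simp at hx

lemma gr_nodup : ∀ (q : List (Fin k)) (S : Finset M), (gr ord q S).Nodup := by
  intro q
  induction q with
  | nil => intro S; simp [gr_nil]
  | cons j q ih =>
    intro S
    by_cases hS : S.Nonempty
    · rw [gr_cons ord hS]
      refine List.nodup_cons.2 ⟨fun hmem => ?_, ih _⟩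
      exact Finset.notMem_erase _ _ (gr_mem_subset ord _ _ hmem)
    · rw [gr, dif_neg hS]; simp

lemma gr_append : ∀ (q₁ q₂ : List (Fin k)) (S : Finset M), q₁.length ≤ S.card →
    gr ord (q₁ ++ q₂) S = gr ord q₁ S ++ gr ord q₂ (S \ (gr ord q₁ S).toFinset) := by
  intro q₁
  induction q₁ with
  | nil => intro q₂ S _; simp [gr_nil]
  | cons j q ih =>
    intro q₂ S hc
    have hS : S.Nonempty := Finset.card_pos.1 (lt_of_lt_of_le (Nat.succ_pos _) hc)
    set α := pk ord j S hS with hα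
    rw [List.cons_append, gr_cons ord hS, gr_cons ord hS, List.cons_append]
    congr 1
    rw [ih q₂ (S.erase α) ?_]
    · congr 2
      rw [List.toFinset_cons]
      ext z
      simp only [Finset.mem_sdiff, Finset.mem_erase, Finset.mem_insert, List.mem_toFinset]
      tauto
    · rw [Finset.card_erase_of_mem (pk_mem ord hS)]
      simpa using Nat.le_sub_one_of_lt (lt_of_lt_of_le (Nat.lt_succ_self _) hc)

lemma gr_erase_not_mem : ∀ (q : List (Fin k)) (S : Finset M) {x : M}, x ∈ S →
    x ∉ gr ord q S → gr ord q (S.erase x) = gr ord q S := by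
  intro q
  induction q with
  | nil => intro S x _ _; rfl
  | cons j q ih =>
    intro S x hxS hxg
    have hS : S.Nonempty := ⟨x, hxS⟩
    rw [gr_cons ord hS] at hxg ⊢
    have hxpk : x ≠ pk ord j S hS := fun h => hxg (h ▸ List.mem_cons_self)
    have hmem : pk ord j S hS ∈ S.erase x :=
      Finset.mem_erase.2 ⟨fun h => hxpk h.symm, pk_mem ord hS⟩
    have hne : (S.erase x).Nonempty := ⟨_, hmem⟩
    rw [gr_cons ord hne]
    have hpk := pk_erase ord hS hmem
    rw [show pk ord j (S.erase x) hne = pk ord j S hS from hpk]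
    congr 1
    rw [Finset.erase_right_comm]
    apply ih
    · exact Finset.mem_erase.2 ⟨hxpk, hxS⟩
    · exact fun h => hxg (List.mem_cons_of_mem _ h)

end Greedy
section LPlate
variable {M : Type*} [DecidableEq M] {k : ℕ}

/-- plate of player `i` given schedule list `q` and pick list `l`. -/
def lplate : List (Fin k) → List M → Fin k → Finset M
  | j :: q, x :: l, i => if j = i then insert x (lplate q l i) else lplate q l i
  | _, _, _ => ∅

lemma lplate_cons (j : Fin k) (q : List (Fin k)) (x : M) (l : List M) (i : Fin k) :
    lplate (j :: q) (x :: l) i = if j = i then insert x (lplate q l i) else lplate q l i := rfl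

lemma lplate_nil_left (l : List M) (i : Fin k) : lplate [] l i = ∅ := by
  cases l <;> rfl

lemma lplate_nil_right (q : List (Fin k)) (i : Fin k) : lplate q ([] : List M) i = ∅ := by
  cases q <;> rfl

lemma lplate_mem_subset : ∀ (q : List (Fin k)) (l : List M) (i : Fin k) {y : M},
    y ∈ lplate q l i → y ∈ l := by
  intro q
  induction q with
  | nil => intro l i y hy; rw [lplate_nil_left] at hy; simp at hy
  | cons j q ih =>
    intro l i y hy
    cases l with
    | nil => rw [lplate_nil_right] at hy; simp at hy
    | cons x l =>
      rw [lplate_cons] at hy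
      by_cases hji : j = i
      · rw [if_pos hji] at hy
        rcases Finset.mem_insert.1 hy with h | h
        · rw [h]; exact List.mem_cons_self
        · exact List.mem_cons_of_mem _ (ih l i h)
      · rw [if_neg hji] at hy
        exact List.mem_cons_of_mem _ (ih l i hy)

lemma lplate_append : ∀ (q₁ q₂ : List (Fin k)) (l₁ l₂ : List M) (i : Fin k),
    q₁.length = l₁.length →
    lplate (q₁ ++ q₂) (l₁ ++ l₂) i = lplate q₁ l₁ i ∪ lplate q₂ l₂ i := by
  intro q₁
  induction q₁ with
  | nil =>
    intro q₂ l₁ l₂ i hlen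
    have : l₁ = [] := List.length_eq_zero_iff.1 hlen.symm
    subst this
    simp [lplate_nil_left]
  | cons j q ih =>
    intro q₂ l₁ l₂ i hlen
    cases l₁ with
    | nil => simp at hlen
    | cons x l =>
      simp only [List.length_cons, Nat.succ.injEq] at hlen
      simp only [List.cons_append, lplate_cons]
      rw [ih q₂ l l₂ i hlen]
      by_cases hji : j = i
      · rw [if_pos hji, if_pos hji, Finset.insert_union]
      · rw [if_neg hji, if_neg hji]

lemma lplate_single_ne {i j : Fin k} (hij : i ≠ j) (l : List M) : lplate [i] l j = ∅ := by
  cases l with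
  | nil => rfl
  | cons z l' =>
    show (if i = j then insert z (lplate [] l' j) else lplate [] l' j) = ∅
    rw [if_neg hij, lplate_nil_left]

variable (ord : Fin k → LinearOrder M)

lemma lplate_gr_not_mem {q : List (Fin k)} {S : Finset M} {j : Fin k} {z : M} (hz : z ∉ S) :
    z ∉ lplate q (gr ord q S) j :=
  fun h => hz (gr_mem_subset ord _ _ (lplate_mem_subset _ _ _ h))

lemma gr_mono : ∀ (q : List (Fin k)) (S : Finset M) (y : M), y ∈ S → q.length < S.card →
    ∀ j, PlateLE (ord j).le (lplate q (gr ord q (S.erase y)) j) (lplate q (gr ord q S) j) := by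
  intro q
  induction q with
  | nil =>
    intro S y _ _ j
    rw [gr_nil, gr_nil, lplate_nil_left]
    exact plateLE_refl (ord_le_refl ord j) _
  | cons j₀ q ih =>
    intro S y hy hc j
    simp only [List.length_cons] at hc
    have hS : S.Nonempty := ⟨y, hy⟩
    set α := pk ord j₀ S hS with hα
    have hαS : α ∈ S := pk_mem ord hS
    have hcard' : q.length < (S.erase α).card := by
      rw [Finset.card_erase_of_mem hαS]; omega
    have hTne : (S.erase α).Nonempty := Finset.card_pos.1 (by omega)
    rw [gr_cons ord hS]
    by_cases hyα : y = α
    · subst hyα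
      set β := pk ord j₀ (S.erase α) hTne with hβ
      have hβT : β ∈ S.erase α := pk_mem ord hTne
      rw [gr_cons ord hTne]
      have IH := ih (S.erase α) β hβT hcard' j
      rw [lplate_cons, lplate_cons]
      by_cases hji : j₀ = j
      · rw [if_pos hji, if_pos hji]
        refine plateLE_insert ?_ ?_ ?_ IH
        · exact lplate_gr_not_mem ord (Finset.notMem_erase _ _)
        · exact lplate_gr_not_mem ord (Finset.notMem_erase _ _)
        · rw [← hji]; exact pk_le ord hS (Finset.mem_of_mem_erase hβT)
      · rw [if_neg hji, if_neg hji]; exact IH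
    · have hαSy : α ∈ S.erase y := Finset.mem_erase.2 ⟨fun h => hyα h.symm, hαS⟩
      have hSy : (S.erase y).Nonempty := ⟨α, hαSy⟩
      have hpk : pk ord j₀ (S.erase y) hSy = α := pk_erase ord hS hαSy
      rw [gr_cons ord hSy, hpk, Finset.erase_right_comm]
      have hyT : y ∈ S.erase α := Finset.mem_erase.2 ⟨hyα, hy⟩
      have IH := ih (S.erase α) y hyT hcard' j
      rw [lplate_cons, lplate_cons]
      by_cases hji : j₀ = j
      · rw [if_pos hji, if_pos hji]
        refine plateLE_insert ?_ ?_ (ord_le_refl ord j α) IH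
        · exact lplate_gr_not_mem ord (fun h => (Finset.notMem_erase α S)
            (Finset.mem_of_mem_erase h))
        · exact lplate_gr_not_mem ord (Finset.notMem_erase _ _)
      · rw [if_neg hji, if_neg hji]; exact IH

lemma lplate_last {q' : List (Fin k)} {i : Fin k} {T : Finset M}
    (hq' : q' ≠ []) (hlast : q'.getLast hq' = i) (hc : q'.length ≤ T.card) :
    ∀ j, j ≠ i → lplate q' (gr ord q' T) j = lplate q'.dropLast (gr ord q'.dropLast T) j := by
  intro j hj
  have hdl : q'.dropLast.length ≤ T.card := by rw [List.length_dropLast]; omega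
  conv_lhs => rw [← List.dropLast_append_getLast hq', hlast,
    gr_append ord _ _ T hdl,
    lplate_append _ _ _ _ _ (gr_length ord _ T hdl).symm,
    lplate_single_ne (fun h => hj h.symm), Finset.union_empty]

end LPlate
section Key
variable {M : Type*} [DecidableEq M] {k : ℕ} (ord : Fin k → LinearOrder M)

lemma gr_key : ∀ (q : List (Fin k)) (i : Fin k) (S : Finset M) (x : M)
    (hne : q ≠ []), q.getLast hne = i → x ∈ S → q.length ≤ S.card →
    (∀ j, j ≠ i → PlateLE (ord j).le
        (lplate q.dropLast (gr ord q.dropLast (S.erase x)) j)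
        (lplate q (gr ord q S) j))
    ∧ ((∀ j, j ≠ i → lplate q.dropLast (gr ord q.dropLast (S.erase x)) j
          = lplate q (gr ord q S) j) →
        PlateLE (ord i).le
          (insert x (lplate q.dropLast (gr ord q.dropLast (S.erase x)) i))
          (lplate q (gr ord q S) i)) := by
  intro q
  induction q with
  | nil => intro i S x hne; exact absurd rfl hne
  | cons j₀ q' ih =>
    intro i S x hne hlast hx hc
    simp only [List.length_cons] at hc
    have hS : S.Nonempty := ⟨x, hx⟩
    rcases eq_or_ne q' [] with hq' | hq'
    · -- base case q = [i]
      subst hq'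
      have hji : j₀ = i := hlast
      subst hji
      rw [gr_cons ord hS]
      simp only [List.dropLast_singleton, gr_nil, lplate_nil_left]
      constructor
      · intro j hj
        rw [lplate_single_ne (fun h => hj h.symm)]
        exact plateLE_refl (ord_le_refl ord j) _
      · intro _
        rw [show lplate [j₀] [pk ord j₀ S hS] j₀
            = insert (pk ord j₀ S hS) (∅ : Finset M) from by
          rw [lplate_cons, if_pos rfl, lplate_nil_left]]
        exact plateLE_insert (Finset.notMem_empty x) (Finset.notMem_empty _)
          (pk_le ord hS hx) (plateLE_refl (ord_le_refl ord j₀) _)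
    · -- q' ≠ []
      have hlast' : q'.getLast hq' = i := by
        rw [← hlast]; exact (List.getLast_cons hq').symm
      have hq'len : 1 ≤ q'.length := List.length_pos_iff.2 hq'
      set α := pk ord j₀ S hS with hαdef
      have hαS : α ∈ S := pk_mem ord hS
      have hcard' : q'.length ≤ (S.erase α).card := by
        rw [Finset.card_erase_of_mem hαS]; omega
      have hTne : (S.erase α).Nonempty := Finset.card_pos.1 (by omega)
      have hdrop : (j₀ :: q').dropLast = j₀ :: q'.dropLast :=
        List.dropLast_cons_of_ne_nil hq'
      have hdllen : q'.dropLast.length = q'.length - 1 := List.length_dropLast (xs := q')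
      have hgrS : gr ord (j₀ :: q') S = α :: gr ord q' (S.erase α) := gr_cons ord hS
      by_cases hxα : x = α
      · subst hxα
        -- case B : x is the first greedy pick
        by_cases hj₀ : j₀ = i
        · -- B1 : first mover is i
          subst hj₀
          set δ := pk ord j₀ (S.erase α) hTne with hδdef
          have hδT : δ ∈ S.erase α := pk_mem ord hTne
          have hgrL : gr ord (j₀ :: q'.dropLast) (S.erase α)
              = δ :: gr ord q'.dropLast ((S.erase α).erase δ) := gr_cons ord hTne
          constructor
          · intro j hj
            rw [hdrop, hgrL, hgrS, lplate_cons, lplate_cons, if_neg (fun h => hj h.symm),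
              if_neg (fun h => hj h.symm), lplate_last ord hq' hlast' hcard' j hj]
            exact gr_mono ord q'.dropLast (S.erase α) δ hδT
              (by rw [Finset.card_erase_of_mem hαS] at hcard' ⊢; omega) j
          · intro H
            rw [hdrop, hgrL, hgrS, lplate_cons, lplate_cons, if_pos rfl, if_pos rfl]
            have hδα : δ ≠ α := Finset.ne_of_mem_erase hδT
            refine plateLE_insert ?_ ?_ (ord_le_refl ord j₀ α) ?_
            · refine fun hmem => ?_
              rcases Finset.mem_insert.1 hmem with h | h
              · exact hδα h.symm
              · exact lplate_gr_not_mem ord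
                  (fun h' => Finset.notMem_erase α S (Finset.mem_of_mem_erase h')) h
            · exact lplate_gr_not_mem ord (Finset.notMem_erase _ _)
            · refine (ih j₀ (S.erase α) δ hq' hlast' hδT hcard').2 ?_
              intro j hj
              have := H j hj
              rw [hdrop, hgrL, hgrS, lplate_cons, lplate_cons, if_neg (fun h => hj h.symm),
                if_neg (fun h => hj h.symm)] at this
              exact this
        · -- B2 : first mover is not i
          set β := pk ord j₀ (S.erase α) hTne with hβdef
          have hβT : β ∈ S.erase α := pk_mem ord hTne
          have hgrL : gr ord (j₀ :: q'.dropLast) (S.erase α)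
              = β :: gr ord q'.dropLast ((S.erase α).erase β) := gr_cons ord hTne
          constructor
          · intro j hj
            rw [hdrop, hgrL, hgrS, lplate_cons, lplate_cons]
            by_cases hjj : j₀ = j
            · rw [if_pos hjj, if_pos hjj, lplate_last ord hq' hlast' hcard' j hj]
              refine plateLE_insert ?_ ?_ ?_ ?_
              · exact lplate_gr_not_mem ord (Finset.notMem_erase _ _)
              · exact lplate_gr_not_mem ord (Finset.notMem_erase _ _)
              · rw [← hjj]; exact pk_le ord hS (Finset.mem_of_mem_erase hβT)
              · exact gr_mono ord q'.dropLast (S.erase α) β hβT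
                  (by rw [Finset.card_erase_of_mem hαS] at hcard' ⊢; omega) j
            · rw [if_neg hjj, if_neg hjj, lplate_last ord hq' hlast' hcard' j hj]
              exact gr_mono ord q'.dropLast (S.erase α) β hβT
                (by rw [Finset.card_erase_of_mem hαS] at hcard' ⊢; omega) j
          · intro H
            exfalso
            have h₀ := H j₀ hj₀
            rw [hdrop, hgrL, hgrS, lplate_cons, lplate_cons, if_pos rfl, if_pos rfl] at h₀
            have hmem : α ∈ insert β (lplate q'.dropLast
                (gr ord q'.dropLast ((S.erase α).erase β)) j₀) := by
              rw [h₀]; exact Finset.mem_insert_self _ _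
            rcases Finset.mem_insert.1 hmem with h | h
            · exact (Finset.notMem_erase α S) (h ▸ hβT)
            · exact lplate_gr_not_mem ord
                (fun h' => Finset.notMem_erase α S (Finset.mem_of_mem_erase h')) h
      · -- case A : x ≠ α
        have hxSα : x ∈ S.erase α := Finset.mem_erase.2 ⟨hxα, hx⟩
        have hαSx : α ∈ S.erase x := Finset.mem_erase.2 ⟨fun h => hxα h.symm, hαS⟩
        have hSx : (S.erase x).Nonempty := ⟨α, hαSx⟩
        have hpk : pk ord j₀ (S.erase x) hSx = α := pk_erase ord hS hαSx
        have hgrL : gr ord (j₀ :: q'.dropLast) (S.erase x)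
            = α :: gr ord q'.dropLast ((S.erase α).erase x) := by
          rw [gr_cons ord hSx, hpk, Finset.erase_right_comm]
        have IH := ih i (S.erase α) x hq' hlast' hxSα hcard'
        constructor
        · intro j hj
          rw [hdrop, hgrL, hgrS, lplate_cons, lplate_cons]
          by_cases hjj : j₀ = j
          · rw [if_pos hjj, if_pos hjj]
            refine plateLE_insert ?_ ?_ (ord_le_refl ord j α) (IH.1 j hj)
            · exact lplate_gr_not_mem ord
                (fun h' => Finset.notMem_erase α S (Finset.mem_of_mem_erase h'))
            · exact lplate_gr_not_mem ord (Finset.notMem_erase _ _)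
          · rw [if_neg hjj, if_neg hjj]; exact IH.1 j hj
        · intro H
          have G := IH.2 ?_
          · rw [hdrop, hgrL, hgrS, lplate_cons, lplate_cons]
            by_cases hji : j₀ = i
            · rw [if_pos hji, if_pos hji, Finset.insert_comm]
              refine plateLE_insert ?_ ?_ (ord_le_refl ord i α) G
              · refine fun hmem => ?_
                rcases Finset.mem_insert.1 hmem with h | h
                · exact hxα h.symm
                · exact lplate_gr_not_mem ord
                    (fun h' => Finset.notMem_erase α S (Finset.mem_of_mem_erase h')) h
              · exact lplate_gr_not_mem ord (Finset.notMem_erase _ _)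
            · rw [if_neg hji, if_neg hji]; exact G
          · intro j hj
            have h₀ := H j hj
            rw [hdrop, hgrL, hgrS, lplate_cons, lplate_cons] at h₀
            by_cases hjj : j₀ = j
            · rw [if_pos hjj, if_pos hjj] at h₀
              have hnA : α ∉ lplate q'.dropLast
                  (gr ord q'.dropLast ((S.erase α).erase x)) j := lplate_gr_not_mem ord
                (fun h' => Finset.notMem_erase α S (Finset.mem_of_mem_erase h'))
              have hnB : α ∉ lplate q' (gr ord q' (S.erase α)) j :=
                lplate_gr_not_mem ord (Finset.notMem_erase _ _)
              have := congrArg (fun (s : Finset M) => s.erase α) h₀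
              simpa [Finset.erase_insert hnA, Finset.erase_insert hnB] using this
            · rw [if_neg hjj, if_neg hjj] at h₀; exact h₀
end Key
section StrategyLemmas
variable {M : Type*} {m : ℕ} (s : Strategy M m)

lemma extend_length : ∀ (j : ℕ) (h : List M), (s.extend j h).length = h.length + j := by
  intro j
  induction j with
  | zero => intro h; rfl
  | succ j ih =>
    intro h
    show (s.extend j (h ++ [s.choice h])).length = _
    rw [ih, List.length_append, List.length_singleton]
    omega

lemma extend_prefix : ∀ (j : ℕ) (h : List M), h <+: s.extend j h := by
  intro j
  induction j with
  | zero => intro h; exact List.prefix_refl h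
  | succ j ih =>
    intro h
    exact List.IsPrefix.trans ⟨[s.choice h], rfl⟩ (ih (h ++ [s.choice h]))

lemma extend_nodup : ∀ (j : ℕ) (h : List M), h.Nodup → h.length + j ≤ m →
    (s.extend j h).Nodup := by
  intro j
  induction j with
  | zero => intro h hh _; exact hh
  | succ j ih =>
    intro h hh hlen
    show (s.extend j (h ++ [s.choice h])).Nodup
    have hch : s.choice h ∉ h := s.valid h hh (by omega)
    refine ih _ ?_ ?_
    · simp [List.nodup_append, hch, hh]
      intro a ha e; exact hch (e ▸ ha)
    · rw [List.length_append, List.length_singleton]; omega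

lemma play_prefix_val {h : List M} (t : Fin m) (ht : t.val < h.length) :
    s.play h t = h.getD t.val (s.choice []) := by
  show (s.extend (m - h.length) h).getD t.val _ = _
  obtain ⟨tail, htail⟩ := extend_prefix s (m - h.length) h
  rw [← htail, List.getD_append _ _ _ _ ht]

lemma play_choice {h : List M} (hlen : h.length < m) :
    s.play h = s.play (h ++ [s.choice h]) := by
  funext t
  show (s.extend (m - h.length) h).getD t.val _
      = (s.extend (m - (h ++ [s.choice h]).length) (h ++ [s.choice h])).getD t.val _
  rw [List.length_append, List.length_singleton]
  have h1 : m - h.length = (m - (h.length + 1)) + 1 := by omega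
  rw [h1]
  rfl

lemma play_at {h : List M} (hlen : h.length < m) :
    s.play h ⟨h.length, hlen⟩ = s.choice h := by
  rw [play_choice s hlen]
  have ht : ((⟨h.length, hlen⟩ : Fin m) : ℕ) < (h ++ [s.choice h]).length := by simp
  rw [play_prefix_val s _ ht]
  show (h ++ [s.choice h]).getD h.length _ = _
  rw [List.getD_append_right _ _ _ _ (le_refl _), Nat.sub_self]
  rfl

lemma play_nodup_list {h : List M} (hh : h.Nodup) (hlen : h.length ≤ m) :
    (s.extend (m - h.length) h).Nodup :=
  extend_nodup s _ h hh (by omega)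

lemma play_length {h : List M} (hlen : h.length ≤ m) :
    (s.extend (m - h.length) h).length = m := by
  rw [extend_length]; omega

lemma play_injective {h : List M} (hh : h.Nodup) (hlen : h.length ≤ m) :
    Function.Injective (s.play h) := by
  intro t t' htt
  have h1 : t.val < (s.extend (m - h.length) h).length := by rw [play_length s hlen]; exact t.2
  have h2 : t'.val < (s.extend (m - h.length) h).length := by
    rw [play_length s hlen]; exact t'.2
  have : (s.extend (m - h.length) h)[t.val] = (s.extend (m - h.length) h)[t'.val] := by
    have e1 : s.play h t = (s.extend (m - h.length) h)[t.val] :=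
      List.getD_eq_getElem _ _ h1
    have e2 : s.play h t' = (s.extend (m - h.length) h)[t'.val] :=
      List.getD_eq_getElem _ _ h2
    rw [← e1, ← e2, htt]
  exact Fin.ext ((List.Nodup.getElem_inj_iff (play_nodup_list s hh hlen)).1 this)

lemma play_suffix_not_mem {h : List M} (hh : h.Nodup) (hlen : h.length ≤ m)
    (t : Fin m) (ht : h.length ≤ t.val) : s.play h t ∉ h := by
  obtain ⟨tail, htail⟩ := extend_prefix s (m - h.length) h
  have hnd := play_nodup_list s hh hlen
  rw [← htail] at hnd
  have hlen2 : t.val - h.length < tail.length := by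
    have := play_length s hlen
    rw [← htail, List.length_append] at this
    omega
  have hval : s.play h t = tail[t.val - h.length] := by
    show (s.extend (m - h.length) h).getD t.val _ = _
    rw [← htail, List.getD_eq_getElem _ _ (by rw [List.length_append]; omega)]
    rw [List.getElem_append_right (by omega)]
  rw [hval]
  have hmem : tail[t.val - h.length] ∈ tail := List.getElem_mem _
  exact fun hmemh => (List.nodup_append.1 hnd).2.2 _ hmemh _ hmem rfl

end StrategyLemmas
section Splate
variable {M : Type*} [DecidableEq M] {m k : ℕ} (P : Fin m → Fin k)

def splate (t₀ : ℕ) (a : Fin m → M) (i : Fin k) : Finset M :=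
  (Finset.univ.filter fun t : Fin m => P t = i ∧ t₀ ≤ t.val).image a

def pplate (t₀ : ℕ) (a : Fin m → M) (i : Fin k) : Finset M :=
  (Finset.univ.filter fun t : Fin m => P t = i ∧ t.val < t₀).image a

lemma splate_zero (a : Fin m → M) (i : Fin k) : splate P 0 a i = plate P a i := by
  unfold splate plate
  congr 1
  apply Finset.filter_congr
  intro t _
  simp

lemma splate_top {t₀ : ℕ} (a : Fin m → M) (i : Fin k) (ht : m ≤ t₀) : splate P t₀ a i = ∅ := by
  unfold splate
  rw [show (Finset.univ.filter fun t : Fin m => P t = i ∧ t₀ ≤ t.val) = ∅ from ?_,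
    Finset.image_empty]
  rw [Finset.filter_eq_empty_iff]
  rintro t - ⟨-, hle⟩
  have := t.2; omega

lemma splate_succ {t₀ : ℕ} (a : Fin m → M) (i : Fin k) (ht : t₀ < m) :
    splate P t₀ a i = if P ⟨t₀, ht⟩ = i
      then insert (a ⟨t₀, ht⟩) (splate P (t₀ + 1) a i) else splate P (t₀ + 1) a i := by
  unfold splate
  ext y
  by_cases hP : P ⟨t₀, ht⟩ = i
  · rw [if_pos hP]
    simp only [Finset.mem_insert, Finset.mem_image, Finset.mem_filter, Finset.mem_univ, true_and]
    constructor
    · rintro ⟨t, ⟨hti, htt⟩, rfl⟩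
      rcases eq_or_lt_of_le htt with heq | hlt
      · left; rw [show t = ⟨t₀, ht⟩ from Fin.ext heq.symm]
      · right; exact ⟨t, ⟨hti, by omega⟩, rfl⟩
    · rintro (rfl | ⟨t, ⟨hti, htt⟩, rfl⟩)
      · exact ⟨⟨t₀, ht⟩, ⟨hP, le_refl _⟩, rfl⟩
      · exact ⟨t, ⟨hti, by omega⟩, rfl⟩
  · rw [if_neg hP]
    simp only [Finset.mem_image, Finset.mem_filter, Finset.mem_univ, true_and]
    constructor
    · rintro ⟨t, ⟨hti, htt⟩, rfl⟩
      refine ⟨t, ⟨hti, ?_⟩, rfl⟩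
      rcases eq_or_lt_of_le htt with heq | hlt
      · exact absurd (by rw [show (⟨t₀, ht⟩ : Fin m) = t from Fin.ext heq]; exact hti) hP
      · omega
    · rintro ⟨t, ⟨hti, htt⟩, rfl⟩; exact ⟨t, ⟨hti, by omega⟩, rfl⟩

lemma pplate_congr {a b : Fin m → M} (t₀ : ℕ) (hab : ∀ t : Fin m, t.val < t₀ → a t = b t)
    (i : Fin k) : pplate P t₀ a i = pplate P t₀ b i := by
  unfold pplate
  apply Finset.image_congr
  rintro t ht
  simp only [Finset.coe_filter, Set.mem_setOf_eq, Finset.mem_univ, true_and] at ht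
  exact hab t ht.2

lemma plate_split (t₀ : ℕ) (a : Fin m → M) (i : Fin k) :
    plate P a i = splate P t₀ a i ∪ pplate P t₀ a i := by
  unfold plate splate pplate
  rw [← Finset.image_union]
  congr 1
  ext t
  simp only [Finset.mem_filter, Finset.mem_univ, true_and, Finset.mem_union]
  constructor
  · intro h
    by_cases hlt : t₀ ≤ t.val
    · exact Or.inl ⟨h, hlt⟩
    · exact Or.inr ⟨h, by omega⟩
  · rintro (⟨h, -⟩ | ⟨h, -⟩) <;> exact h

lemma pplate_disjoint {a : Fin m → M} (ha : Function.Injective a) (t₀ : ℕ) (i : Fin k) :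
    Disjoint (pplate P t₀ a i) (splate P t₀ a i) := by
  rw [Finset.disjoint_left]
  rintro x hx hx2
  simp only [pplate, splate, Finset.mem_image, Finset.mem_filter, Finset.mem_univ,
    true_and] at hx hx2
  obtain ⟨t, ⟨-, hlt⟩, rfl⟩ := hx
  obtain ⟨t', ⟨-, hle⟩, he⟩ := hx2
  cases ha he
  omega

lemma plate_of_splate (ord : Fin k → LinearOrder M) {a b : Fin m → M} (t₀ : ℕ)
    (ha : Function.Injective a) (hb : Function.Injective b)
    (hagree : ∀ t : Fin m, t.val < t₀ → a t = b t) (j : Fin k) :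
    (PlateLE (ord j).le (splate P t₀ a j) (splate P t₀ b j) →
       PlateLE (ord j).le (plate P a j) (plate P b j))
    ∧ (splate P t₀ a j ≠ splate P t₀ b j → plate P a j ≠ plate P b j)
    ∧ (splate P t₀ a j = splate P t₀ b j → plate P a j = plate P b j) := by
  have hpp : pplate P t₀ a j = pplate P t₀ b j := pplate_congr P t₀ hagree j
  have hda : Disjoint (pplate P t₀ a j) (splate P t₀ a j) := pplate_disjoint P ha t₀ j
  have hdb : Disjoint (pplate P t₀ b j) (splate P t₀ b j) := pplate_disjoint P hb t₀ j
  rw [plate_split P t₀ a j, plate_split P t₀ b j, ← hpp]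
  refine ⟨fun hle => ?_, fun hne heq => hne ?_, fun heq => by rw [heq]⟩
  · exact plateLE_union (ord_le_refl ord j) hda (hpp ▸ hdb) hle
  · have hdb' : Disjoint (pplate P t₀ a j) (splate P t₀ b j) := by rw [hpp]; exact hdb
    calc splate P t₀ a j
        = (splate P t₀ a j ∪ pplate P t₀ a j) \ pplate P t₀ a j :=
          (Finset.union_sdiff_cancel_right hda.symm).symm
      _ = (splate P t₀ b j ∪ pplate P t₀ a j) \ pplate P t₀ a j := by rw [heq]
      _ = splate P t₀ b j := Finset.union_sdiff_cancel_right hdb'.symm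

end Splate
section Sched

def schedList {m : ℕ} (L : Finset (Fin m)) (t₀ : ℕ) : List (Fin m) :=
  (((List.finRange m).drop t₀).filter fun t => decide (t ∈ L)) ++
    (((List.finRange m).drop t₀).filter fun t => !decide (t ∈ L)).reverse

lemma schedList_length {m : ℕ} (L : Finset (Fin m)) (t₀ : ℕ) :
    (schedList L t₀).length = m - t₀ := by
  unfold schedList
  rw [List.length_append, List.length_reverse]
  have h := (List.filter_append_perm (fun t => decide (t ∈ L))
    ((List.finRange m).drop t₀)).length_eq
  rw [List.length_append] at h
  rw [h, List.length_drop, List.length_finRange]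

lemma finRange_drop_eq {m t₀ : ℕ} (ht : t₀ < m) :
    (List.finRange m).drop t₀ = ⟨t₀, ht⟩ :: (List.finRange m).drop (t₀ + 1) := by
  rw [List.drop_eq_getElem_cons (by simpa using ht)]
  congr 1
  exact Fin.ext (by simp)

lemma schedList_lout {m : ℕ} {L : Finset (Fin m)} {t₀ : ℕ} (ht : t₀ < m)
    (hL : (⟨t₀, ht⟩ : Fin m) ∈ L) :
    schedList L t₀ = ⟨t₀, ht⟩ :: schedList L (t₀ + 1) := by
  unfold schedList
  rw [finRange_drop_eq ht, List.filter_cons_of_pos (by simpa using hL),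
    List.filter_cons_of_neg (by simpa using hL), List.cons_append]

lemma schedList_knight {m : ℕ} {L : Finset (Fin m)} {t₀ : ℕ} (ht : t₀ < m)
    (hL : (⟨t₀, ht⟩ : Fin m) ∉ L) :
    schedList L t₀ = schedList L (t₀ + 1) ++ [⟨t₀, ht⟩] := by
  unfold schedList
  rw [finRange_drop_eq ht, List.filter_cons_of_neg (by simpa using hL),
    List.filter_cons_of_pos (by simpa using hL), List.reverse_cons, ← List.append_assoc]

end Sched

section Pool
variable {M : Type*} [Fintype M] [DecidableEq M]

lemma rem_card (h : List M) (hh : h.Nodup) :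
    (Finset.univ \ h.toFinset).card = Fintype.card M - h.length := by
  rw [Finset.card_sdiff_of_subset (Finset.subset_univ _), Finset.card_univ,
    List.toFinset_card_of_nodup hh]

lemma rem_append (h : List M) (x : M) :
    Finset.univ \ (h ++ [x]).toFinset = (Finset.univ \ h.toFinset).erase x := by
  ext z
  simp only [Finset.mem_sdiff, Finset.mem_univ, true_and, List.toFinset_append,
    Finset.mem_union, List.toFinset_cons, List.toFinset_nil, Finset.mem_erase,
    Finset.mem_insert, Finset.notMem_empty, or_false, List.mem_toFinset]
  tauto

lemma mem_rem_iff (h : List M) (x : M) :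
    x ∈ Finset.univ \ h.toFinset ↔ x ∉ h := by
  simp [List.mem_toFinset]

end Pool
section KnightCore
variable {M : Type*} [DecidableEq M] {k : ℕ}

lemma knight_core (ord : Fin k → LinearOrder M) (I : Fin k) (τq : List (Fin k))
    (rem : Finset M) (hcard : τq.length + 1 ≤ rem.card) (y : M) (hy : y ∈ rem)
    (hno : ∀ x ∈ rem,
      ¬( ((∀ j, j ≠ I → PlateLE (ord j).le
            (lplate τq (gr ord τq (rem.erase y)) j) (lplate τq (gr ord τq (rem.erase x)) j)) ∧
          ∃ j, j ≠ I ∧ PlateLE (ord j).le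
            (lplate τq (gr ord τq (rem.erase y)) j) (lplate τq (gr ord τq (rem.erase x)) j)
            ∧ lplate τq (gr ord τq (rem.erase y)) j ≠ lplate τq (gr ord τq (rem.erase x)) j)
        ∨ ((∀ j, j ≠ I → lplate τq (gr ord τq (rem.erase y)) j
              = lplate τq (gr ord τq (rem.erase x)) j) ∧
           PlateLE (ord I).le (insert y (lplate τq (gr ord τq (rem.erase y)) I))
             (insert x (lplate τq (gr ord τq (rem.erase x)) I))
           ∧ insert y (lplate τq (gr ord τq (rem.erase y)) I)
              ≠ insert x (lplate τq (gr ord τq (rem.erase x)) I)) )) :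
    ∀ j, (if I = j then insert y (lplate τq (gr ord τq (rem.erase y)) j)
          else lplate τq (gr ord τq (rem.erase y)) j)
        = lplate (τq ++ [I]) (gr ord (τq ++ [I]) rem) j := by
  have hτcard : τq.length ≤ rem.card := by omega
  have hGlen : (gr ord τq rem).length = τq.length := gr_length ord τq rem hτcard
  have hGnd : (gr ord τq rem).Nodup := gr_nodup ord τq rem
  have hGsub : (gr ord τq rem).toFinset ⊆ rem :=
    fun x hx => gr_mem_subset ord _ _ (List.mem_toFinset.1 hx)
  have hpoolcard : (rem \ (gr ord τq rem).toFinset).card = rem.card - τq.length := by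
    rw [Finset.card_sdiff_of_subset hGsub, List.toFinset_card_of_nodup hGnd, hGlen]
  have hpoolne : (rem \ (gr ord τq rem).toFinset).Nonempty := Finset.card_pos.1 (by omega)
  set xs : M := pk ord I (rem \ (gr ord τq rem).toFinset) hpoolne with hxsdef
  have hxspool : xs ∈ rem \ (gr ord τq rem).toFinset := pk_mem ord hpoolne
  have hxsrem : xs ∈ rem := (Finset.mem_sdiff.1 hxspool).1
  have hxsnotG : xs ∉ gr ord τq rem :=
    fun hmem => (Finset.mem_sdiff.1 hxspool).2 (List.mem_toFinset.2 hmem)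
  have hleftover : gr ord τq (rem.erase xs) = gr ord τq rem :=
    gr_erase_not_mem ord τq rem hxsrem hxsnotG
  have hgrq : gr ord (τq ++ [I]) rem = gr ord τq rem ++ [xs] := by
    rw [gr_append ord τq [I] rem hτcard]
    congr 1
    rw [gr_cons ord hpoolne, gr_nil, hxsdef]
  have hCne : ∀ j, j ≠ I → lplate (τq ++ [I]) (gr ord τq rem ++ [xs]) j
      = lplate τq (gr ord τq rem) j := by
    intro j hj
    rw [lplate_append _ _ _ _ _ hGlen.symm, lplate_single_ne (fun e => hj e.symm),
      Finset.union_empty]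
  have hCi : lplate (τq ++ [I]) (gr ord τq rem ++ [xs]) I
      = insert xs (lplate τq (gr ord τq rem) I) := by
    rw [lplate_append _ _ _ _ _ hGlen.symm,
      show lplate [I] [xs] I = insert xs ∅ from by rw [lplate_cons, if_pos rfl, lplate_nil_left],
      Finset.union_comm]
    rw [Finset.insert_eq, Finset.insert_eq, Finset.union_assoc, Finset.empty_union]
  have KEY := gr_key ord (τq ++ [I]) I rem y (by simp) (by simp) hy
    (by rw [List.length_append, List.length_singleton]; omega)
  rw [List.dropLast_concat] at KEY
  -- Claim A : other players' plates agree
  have claimA : ∀ j, j ≠ I → lplate τq (gr ord τq (rem.erase y)) j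
      = lplate τq (gr ord τq (rem.erase xs)) j := by
    by_contra hcon
    push_neg at hcon
    obtain ⟨j₀, hj₀, hj₀ne⟩ := hcon
    apply hno xs hxsrem
    refine Or.inl ⟨fun j hj => ?_, j₀, hj₀, ?_, hj₀ne⟩
    · have h1 := KEY.1 j hj
      rwa [hgrq, hCne j hj, ← hleftover] at h1
    · have h1 := KEY.1 j₀ hj₀
      rwa [hgrq, hCne j₀ hj₀, ← hleftover] at h1
  -- Claim B : player I's plate agrees
  have claimB : insert y (lplate τq (gr ord τq (rem.erase y)) I)
      = insert xs (lplate τq (gr ord τq (rem.erase xs)) I) := by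
    by_contra hne
    apply hno xs hxsrem
    refine Or.inr ⟨claimA, ?_, hne⟩
    have h2 := KEY.2 ?_
    · rwa [hgrq, hCi, ← hleftover] at h2
    · intro j hj
      rw [claimA j hj, hleftover, hgrq, hCne j hj]
  -- Conclusion
  intro j
  by_cases hIj : I = j
  · subst hIj
    rw [if_pos rfl, hgrq, hCi, claimB, hleftover]
  · rw [if_neg hIj, hgrq, hCne j (fun e => hIj e.symm), claimA j (fun e => hIj e.symm), hleftover]

end KnightCore
section Main
variable {M : Type*} [Fintype M] [DecidableEq M] {m k : ℕ}

lemma main_induction (hm : m ≤ Fintype.card M) (P : Fin m → Fin k)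
    (ord : Fin k → LinearOrder M) (L : Finset (Fin m))
    (big : Fin m → (Fin m → M) → (Fin m → M) → Prop)
    (hext : ∀ t ∉ L, ∀ a b : Fin m → M, Function.Injective a → Function.Injective b →
      KnightLT P ord (P t) a b → big t a b)
    (s : Strategy M m)
    (hs : SPE (fun t => if t ∈ L then LoutLT P ord (P t) else big t) s) :
    ∀ (r t₀ : ℕ) (h : List M), h.Nodup → h.length = t₀ → t₀ + r = m →
      ∀ j, splate P t₀ (s.play h) j
        = lplate (List.map P (schedList L t₀))
            (gr ord (List.map P (schedList L t₀)) (Finset.univ \ h.toFinset)) j := by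
  intro r
  induction r with
  | zero =>
    intro t₀ h hh hlen heq j
    have hsched : schedList L t₀ = [] :=
      List.length_eq_zero_iff.1 (by rw [schedList_length]; omega)
    rw [splate_top P _ _ (by omega), hsched]
    rfl
  | succ r ih =>
    intro t₀ h hh hlen heq j
    have ht : t₀ < m := by omega
    have hlenm : h.length < m := by omega
    have hremcard : (Finset.univ \ h.toFinset).card = Fintype.card M - t₀ := by
      rw [rem_card h hh, hlen]
    have hremne : (Finset.univ \ h.toFinset).Nonempty := Finset.card_pos.1 (by omega)
    have hynoth : s.choice h ∉ h := s.valid h hh hlenm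
    have hyrem : s.choice h ∈ Finset.univ \ h.toFinset := (mem_rem_iff h _).2 hynoth
    have hplay : s.play h = s.play (h ++ [s.choice h]) := play_choice s hlenm
    have happ_nodup : ∀ x, x ∉ h → (h ++ [x]).Nodup := by
      intro x hx
      rw [List.nodup_append]
      exact ⟨hh, List.nodup_singleton x, fun a ha b hb e => by
        subst e; rw [List.mem_singleton] at hb; subst hb; exact hx ha⟩
    have happ_len : ∀ x : M, (h ++ [x]).length = t₀ + 1 := by
      intro x; rw [List.length_append, List.length_singleton, hlen]
    have hIH : ∀ x, x ∉ h → ∀ j', splate P (t₀ + 1) (s.play (h ++ [x])) j'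
        = lplate (List.map P (schedList L (t₀ + 1)))
            (gr ord (List.map P (schedList L (t₀ + 1)))
              ((Finset.univ \ h.toFinset).erase x)) j' := by
      intro x hx j'
      have := ih (t₀ + 1) (h ++ [x]) (happ_nodup x hx) (happ_len x) (by omega) j'
      rwa [rem_append h x] at this
    have hplayx : ∀ x : M, s.play (h ++ [x]) ⟨t₀, ht⟩ = x := by
      intro x
      rw [play_prefix_val s _ (by rw [happ_len x]; exact Nat.lt_succ_self t₀)]
      show (h ++ [x]).getD t₀ _ = x
      rw [← hlen, List.getD_append_right _ _ _ _ (le_refl _), Nat.sub_self]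
      rfl
    have hplayt : s.play h ⟨t₀, ht⟩ = s.choice h := by
      rw [hplay, hplayx]
    have hagree : ∀ (x : M) (u : Fin m), u.val < t₀ → s.play h u = s.play (h ++ [x]) u := by
      intro x u hu
      rw [play_prefix_val s u (by omega), play_prefix_val s u (by rw [happ_len x]; omega)]
      exact (List.getD_append _ _ _ _ (by omega)).symm
    have hinjh : Function.Injective (s.play h) := play_injective s hh (by omega)
    have hinjx : ∀ x, x ∉ h → Function.Injective (s.play (h ++ [x])) :=
      fun x hx => play_injective s (happ_nodup x hx) (by rw [happ_len x]; omega)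
    have hSPE : ∀ x, x ∉ h →
        ¬ (if (⟨t₀, ht⟩ : Fin m) ∈ L then LoutLT P ord (P ⟨t₀, ht⟩) else big ⟨t₀, ht⟩)
          (s.play h) (s.play (h ++ [x])) :=
      fun x hx => hs ⟨t₀, ht⟩ h hh hlen x hx
    have hS : ∀ x, x ∉ h → ∀ j', splate P t₀ (s.play (h ++ [x])) j'
        = (if P ⟨t₀, ht⟩ = j'
           then insert x (lplate (List.map P (schedList L (t₀ + 1)))
             (gr ord (List.map P (schedList L (t₀ + 1)))
               ((Finset.univ \ h.toFinset).erase x)) j')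
           else lplate (List.map P (schedList L (t₀ + 1)))
             (gr ord (List.map P (schedList L (t₀ + 1)))
               ((Finset.univ \ h.toFinset).erase x)) j') := by
      intro x hx j'
      rw [splate_succ P (s.play (h ++ [x])) j' ht, hplayx x, hIH x hx j']
    by_cases hL : (⟨t₀, ht⟩ : Fin m) ∈ L
    · -- lout case
      have hznoth : pk ord (P ⟨t₀, ht⟩) (Finset.univ \ h.toFinset) hremne ∉ h :=
        (mem_rem_iff h _).1 (pk_mem ord hremne)
      have hyz : s.choice h = pk ord (P ⟨t₀, ht⟩) (Finset.univ \ h.toFinset) hremne := by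
        by_contra hne
        apply hSPE _ hznoth
        rw [if_pos hL]
        refine ⟨⟨t₀, ht⟩, rfl, fun u hu => hagree _ u hu, ?_⟩
        rw [hplayt, hplayx]
        letI := ord (P ⟨t₀, ht⟩)
        exact lt_of_le_of_ne (pk_le ord hremne hyrem) hne
      rw [hplay, hS (s.choice h) hynoth j,
        schedList_lout ht hL, List.map_cons, gr_cons ord hremne, ← hyz, lplate_cons]
    · -- knight case
      have hnoimp : ∀ x, x ∉ h → ¬ big ⟨t₀, ht⟩ (s.play h) (s.play (h ++ [x])) := by
        intro x hx
        have := hSPE x hx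
        rwa [if_neg hL] at this
      have hnoknight : ∀ x, x ∉ h →
          ¬ KnightLT P ord (P ⟨t₀, ht⟩) (s.play h) (s.play (h ++ [x])) :=
        fun x hx hK => hnoimp x hx (hext ⟨t₀, ht⟩ hL _ _ hinjh (hinjx x hx) hK)
      have hlift : ∀ x, x ∉ h → ∀ j' : Fin k,
          (PlateLE (ord j').le (splate P t₀ (s.play h) j') (splate P t₀ (s.play (h ++ [x])) j') →
            PlateLE (ord j').le (plate P (s.play h) j') (plate P (s.play (h ++ [x])) j'))
          ∧ (splate P t₀ (s.play h) j' ≠ splate P t₀ (s.play (h ++ [x])) j' →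
              plate P (s.play h) j' ≠ plate P (s.play (h ++ [x])) j')
          ∧ (splate P t₀ (s.play h) j' = splate P t₀ (s.play (h ++ [x])) j' →
              plate P (s.play h) j' = plate P (s.play (h ++ [x])) j') :=
        fun x hx j' => plate_of_splate P ord t₀ hinjh (hinjx x hx) (fun u hu => hagree x u hu) j'
    -- suffix-level no-improvement, in the form needed by knight_core
      have hno : ∀ x ∈ Finset.univ \ h.toFinset,
          ¬( ((∀ j', j' ≠ P ⟨t₀, ht⟩ → PlateLE (ord j').le
                (lplate (List.map P (schedList L (t₀ + 1)))
                  (gr ord (List.map P (schedList L (t₀ + 1)))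
                    ((Finset.univ \ h.toFinset).erase (s.choice h))) j')
                (lplate (List.map P (schedList L (t₀ + 1)))
                  (gr ord (List.map P (schedList L (t₀ + 1)))
                    ((Finset.univ \ h.toFinset).erase x)) j')) ∧
              ∃ j', j' ≠ P ⟨t₀, ht⟩ ∧ PlateLE (ord j').le
                (lplate (List.map P (schedList L (t₀ + 1)))
                  (gr ord (List.map P (schedList L (t₀ + 1)))
                    ((Finset.univ \ h.toFinset).erase (s.choice h))) j')
                (lplate (List.map P (schedList L (t₀ + 1)))
                  (gr ord (List.map P (schedList L (t₀ + 1)))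
                    ((Finset.univ \ h.toFinset).erase x)) j')
                ∧ lplate (List.map P (schedList L (t₀ + 1)))
                  (gr ord (List.map P (schedList L (t₀ + 1)))
                    ((Finset.univ \ h.toFinset).erase (s.choice h))) j'
                  ≠ lplate (List.map P (schedList L (t₀ + 1)))
                  (gr ord (List.map P (schedList L (t₀ + 1)))
                    ((Finset.univ \ h.toFinset).erase x)) j')
            ∨ ((∀ j', j' ≠ P ⟨t₀, ht⟩ → lplate (List.map P (schedList L (t₀ + 1)))
                  (gr ord (List.map P (schedList L (t₀ + 1)))
                    ((Finset.univ \ h.toFinset).erase (s.choice h))) j'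
                  = lplate (List.map P (schedList L (t₀ + 1)))
                  (gr ord (List.map P (schedList L (t₀ + 1)))
                    ((Finset.univ \ h.toFinset).erase x)) j') ∧
               PlateLE (ord (P ⟨t₀, ht⟩)).le
                 (insert (s.choice h) (lplate (List.map P (schedList L (t₀ + 1)))
                   (gr ord (List.map P (schedList L (t₀ + 1)))
                     ((Finset.univ \ h.toFinset).erase (s.choice h))) (P ⟨t₀, ht⟩)))
                 (insert x (lplate (List.map P (schedList L (t₀ + 1)))
                   (gr ord (List.map P (schedList L (t₀ + 1)))
                     ((Finset.univ \ h.toFinset).erase x)) (P ⟨t₀, ht⟩)))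
               ∧ insert (s.choice h) (lplate (List.map P (schedList L (t₀ + 1)))
                   (gr ord (List.map P (schedList L (t₀ + 1)))
                     ((Finset.univ \ h.toFinset).erase (s.choice h))) (P ⟨t₀, ht⟩))
                  ≠ insert x (lplate (List.map P (schedList L (t₀ + 1)))
                   (gr ord (List.map P (schedList L (t₀ + 1)))
                     ((Finset.univ \ h.toFinset).erase x)) (P ⟨t₀, ht⟩)) )) := by
        intro x hxrem hcond
        have hxnoth : x ∉ h := (mem_rem_iff h x).1 hxrem
        apply hnoknight x hxnoth
        have eY0 : ∀ j' : Fin k, splate P t₀ (s.play h) j'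
            = splate P t₀ (s.play (h ++ [s.choice h])) j' := fun j' => by rw [hplay]
        have eY : ∀ j' : Fin k, splate P t₀ (s.play h) j'
            = splate P t₀ (s.play (h ++ [s.choice h])) j' := eY0
        have eX := hS x hxnoth
        rcases hcond with ⟨hall, j₀, hj₀, hLE, hNE⟩ | ⟨hall, hLE, hNE⟩
        · refine Or.inl ⟨fun j' hj' => ?_, j₀, hj₀, ?_, ?_⟩
          · refine (hlift x hxnoth j').1 ?_
            rw [eY j', hS (s.choice h) hynoth j', eX j', if_neg (fun e => hj' e.symm), if_neg (fun e => hj' e.symm)]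
            exact hall j' hj'
          · refine (hlift x hxnoth j₀).1 ?_
            rw [eY j₀, hS (s.choice h) hynoth j₀, eX j₀, if_neg (fun e => hj₀ e.symm), if_neg (fun e => hj₀ e.symm)]
            exact hLE
          · refine (hlift x hxnoth j₀).2.1 ?_
            rw [eY j₀, hS (s.choice h) hynoth j₀, eX j₀, if_neg (fun e => hj₀ e.symm), if_neg (fun e => hj₀ e.symm)]
            exact hNE
        · refine Or.inr ⟨fun j' hj' => ?_, ?_, ?_⟩
          · refine (hlift x hxnoth j').2.2 ?_
            rw [eY j', hS (s.choice h) hynoth j', eX j', if_neg (fun e => hj' e.symm), if_neg (fun e => hj' e.symm)]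
            exact hall j' hj'
          · refine (hlift x hxnoth (P ⟨t₀, ht⟩)).1 ?_
            rw [eY _, hS (s.choice h) hynoth _, eX _, if_pos rfl, if_pos rfl]
            exact hLE
          · refine (hlift x hxnoth (P ⟨t₀, ht⟩)).2.1 ?_
            rw [eY _, hS (s.choice h) hynoth _, eX _, if_pos rfl, if_pos rfl]
            exact hNE
      have hcore := knight_core ord (P ⟨t₀, ht⟩) (List.map P (schedList L (t₀ + 1)))
        (Finset.univ \ h.toFinset)
        (by rw [List.length_map, schedList_length]; omega)
        (s.choice h) hyrem hno j
      rw [hplay, hS (s.choice h) hynoth j, hcore,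
        show List.map P (schedList L t₀)
          = List.map P (schedList L (t₀ + 1)) ++ [P ⟨t₀, ht⟩] from by
            rw [schedList_knight ht hL, List.map_append]; rfl]

end Main
section Bridge
variable {M : Type*} [DecidableEq M] {m k : ℕ}

lemma card_filter_lt {m : ℕ} (t₀ : ℕ) (ht : t₀ ≤ m) :
    (Finset.univ.filter fun t : Fin m => t.val < t₀).card = t₀ := by
  induction t₀ with
  | zero => simp
  | succ n ihn =>
    have hn : n < m := by omega
    have hstep : (Finset.univ.filter fun t : Fin m => t.val < n + 1)
        = insert ⟨n, hn⟩ (Finset.univ.filter fun t : Fin m => t.val < n) := by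
      ext u
      simp only [Finset.mem_filter, Finset.mem_univ, true_and, Finset.mem_insert]
      constructor
      · intro hu
        by_cases h : u.val < n
        · exact Or.inr h
        · exact Or.inl (Fin.ext (by simp; omega))
      · rintro (rfl | hu)
        · simp
        · omega
    rw [hstep, Finset.card_insert_of_notMem (by simp), ihn (by omega)]

lemma plate_eq_lplate_aux (Q : Fin m → Fin k) (f : Fin m → M) (i : Fin k) :
    ∀ ts : List (Fin m),
      ((ts.toFinset.filter fun t => Q t = i).image f)
        = lplate (List.map Q ts) (List.map f ts) i := by
  intro ts
  induction ts with
  | nil => simp [lplate_nil_left]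
  | cons t ts ihts =>
    rw [List.map_cons, List.map_cons, lplate_cons, List.toFinset_cons, Finset.filter_insert]
    by_cases hq : Q t = i
    · rw [if_pos hq, if_pos hq, Finset.image_insert, ihts]
    · rw [if_neg hq, if_neg hq, ihts]

lemma plate_eq_lplate (Q : Fin m → Fin k) (f : Fin m → M) (i : Fin k) :
    plate Q f i = lplate (List.map Q (List.finRange m)) (List.map f (List.finRange m)) i := by
  rw [← plate_eq_lplate_aux Q f i (List.finRange m)]
  unfold plate
  congr 2
  exact (List.toFinset_finRange m).symm

end Bridge

section GreedyId
variable {M : Type*} [Fintype M] [DecidableEq M] {m k : ℕ}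

lemma greedy_list_eq (hm : m ≤ Fintype.card M) (Q : Fin m → Fin k)
    (ord : Fin k → LinearOrder M) (b : Fin m → M) (hb : IsGreedy Q ord b) :
    ∀ (r t₀ : ℕ), t₀ + r = m →
      List.map b ((List.finRange m).drop t₀)
        = gr ord (List.map Q ((List.finRange m).drop t₀))
            (Finset.univ \ (Finset.univ.filter fun t : Fin m => t.val < t₀).image b) := by
  intro r
  induction r with
  | zero =>
    intro t₀ heq
    rw [List.drop_eq_nil_of_le (by rw [List.length_finRange]; omega)]
    rfl
  | succ r ih =>
    intro t₀ heq
    have ht : t₀ < m := by omega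
    have hcard : (Finset.univ \ (Finset.univ.filter
        fun t : Fin m => t.val < t₀).image b).card = Fintype.card M - t₀ := by
      rw [Finset.card_sdiff_of_subset (Finset.subset_univ _), Finset.card_univ,
        Finset.card_image_of_injective _ hb.1, card_filter_lt t₀ (by omega)]
    have hne : (Finset.univ \ (Finset.univ.filter
        fun t : Fin m => t.val < t₀).image b).Nonempty := Finset.card_pos.1 (by omega)
    have hbtmem : b ⟨t₀, ht⟩ ∈ Finset.univ \ (Finset.univ.filter
        fun t : Fin m => t.val < t₀).image b := by
      simp only [Finset.mem_sdiff, Finset.mem_univ, true_and, Finset.mem_image,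
        Finset.mem_filter, not_exists, not_and]
      intro u hu he
      cases hb.1 he
      simp at hu
    have hpk : pk ord (Q ⟨t₀, ht⟩) _ hne = b ⟨t₀, ht⟩ := by
      letI := ord (Q ⟨t₀, ht⟩)
      apply le_antisymm
      · apply Finset.max'_le
        intro x hx
        simp only [Finset.mem_sdiff, Finset.mem_univ, true_and, Finset.mem_image,
          Finset.mem_filter, not_exists, not_and] at hx
        rcases eq_or_ne x (b ⟨t₀, ht⟩) with rfl | hne'
        · exact le_refl _
        · refine le_of_lt (hb.2 ⟨t₀, ht⟩ x ?_ hne')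
          intro u hu hbu
          exact hx u hu hbu
      · exact Finset.le_max' _ _ hbtmem
    rw [finRange_drop_eq ht, List.map_cons, List.map_cons, gr_cons ord hne, hpk]
    congr 1
    rw [ih (t₀ + 1) (by omega)]
    congr 1
    ext z
    simp only [Finset.mem_erase, Finset.mem_sdiff, Finset.mem_univ, true_and,
      Finset.mem_image, Finset.mem_filter, not_exists, not_and]
    constructor
    · intro hz
      refine ⟨fun hzb => hz ⟨t₀, ht⟩ (by simp) hzb.symm, fun u hu hbu => hz u (by omega) hbu⟩
    · rintro ⟨hzb, hz⟩ u hu hbu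
      by_cases hlt : u.val < t₀
      · exact hz u hlt hbu
      · exact hzb (by rw [← hbu, show u = ⟨t₀, ht⟩ from Fin.ext (by simp at hu ⊢; omega)])
      
end GreedyId
section SigmaList

lemma sigma_list {m : ℕ} (L : Finset (Fin m)) (σ : Equiv.Perm (Fin m))
    (hσmem : ∀ u : Fin m, σ u ∈ L ↔ u.val < L.card)
    (hσinc : ∀ u v : Fin m, u < v → v.val < L.card → σ u < σ v)
    (hσdec : ∀ u v : Fin m, L.card ≤ u.val → u < v → σ v < σ u) :
    List.map σ (List.finRange m) = schedList L 0 := by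
  have hcardle : L.card ≤ m := by simpa using Finset.card_le_univ L
  have hsl : schedList L 0 = ((List.finRange m).filter fun t => decide (t ∈ L))
      ++ (((List.finRange m).filter fun t => !decide (t ∈ L)).reverse) := by
    rw [schedList, List.drop_zero]
  have hl1nd : ((List.finRange m).filter fun t => decide (t ∈ L)).Nodup :=
    (List.nodup_finRange m).filter _
  have hl2nd : ((List.finRange m).filter fun t => !decide (t ∈ L)).Nodup :=
    (List.nodup_finRange m).filter _
  have hl1fin : ((List.finRange m).filter fun t => decide (t ∈ L)).toFinset = L := by
    ext u; simp [List.mem_filter]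
  have hl2fin : ((List.finRange m).filter fun t => !decide (t ∈ L)).toFinset = Lᶜ := by
    ext u; simp [List.mem_filter]
  have hl1len : ((List.finRange m).filter fun t => decide (t ∈ L)).length = L.card := by
    have hcc := List.toFinset_card_of_nodup hl1nd
    rw [hl1fin] at hcc
    omega
  have hl2len : ((List.finRange m).filter fun t => !decide (t ∈ L)).length = m - L.card := by
    have hcc := List.toFinset_card_of_nodup hl2nd
    rw [hl2fin, Finset.card_compl, Fintype.card_fin] at hcc
    omega
  have hl1sorted : ((List.finRange m).filter fun t => decide (t ∈ L)).Pairwise (· < ·) :=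
    (List.pairwise_lt_finRange m).sublist List.filter_sublist
  have hl2sorted : ((List.finRange m).filter fun t => !decide (t ∈ L)).Pairwise (· < ·) :=
    (List.pairwise_lt_finRange m).sublist List.filter_sublist
  -- the increasing part
  have hf : (fun v : Fin L.card =>
        ((List.finRange m).filter fun t => decide (t ∈ L)).get (Fin.cast hl1len.symm v))
      = (fun v : Fin L.card => σ ⟨v.val, lt_of_lt_of_le v.2 hcardle⟩) := by
    have e1 := Finset.orderEmbOfFin_unique (f := fun v : Fin L.card =>
        ((List.finRange m).filter fun t => decide (t ∈ L)).get (Fin.cast hl1len.symm v))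
      (rfl : L.card = L.card) ?_ ?_
    have e2 := Finset.orderEmbOfFin_unique (f := fun v : Fin L.card =>
        σ ⟨v.val, lt_of_lt_of_le v.2 hcardle⟩) (rfl : L.card = L.card) ?_ ?_
    · rw [e1, e2]
    · intro v
      exact (hσmem _).2 v.2
    · intro v w hvw
      exact hσinc _ _ hvw w.2
    · intro v
      have h2 : ((List.finRange m).filter fun t => decide (t ∈ L)).get
          (Fin.cast hl1len.symm v) ∈ ((List.finRange m).filter
            fun t => decide (t ∈ L)).toFinset := List.mem_toFinset.2
        (by rw [List.get_eq_getElem]; exact List.getElem_mem _)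
      rw [hl1fin] at h2
      exact h2
    · intro v w hvw
      rw [List.pairwise_iff_get] at hl1sorted
      exact hl1sorted _ _ hvw
  -- the decreasing part
  have hkb : ∀ v : Fin (((List.finRange m).filter fun t => !decide (t ∈ L)).length),
      m - 1 - v.val < m := by
    intro v; have hv := v.2; omega
  have hg : (fun v : Fin (((List.finRange m).filter fun t => !decide (t ∈ L)).length) =>
        ((List.finRange m).filter fun t => !decide (t ∈ L)).get v)
      = (fun v : Fin (((List.finRange m).filter fun t => !decide (t ∈ L)).length) =>
        σ ⟨m - 1 - v.val, hkb v⟩) := by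
    have hc : Lᶜ.card = ((List.finRange m).filter fun t => !decide (t ∈ L)).length := by
      rw [Finset.card_compl, Fintype.card_fin, hl2len]
    have e1 := Finset.orderEmbOfFin_unique (f := fun v =>
        ((List.finRange m).filter fun t => !decide (t ∈ L)).get v) hc ?_ ?_
    have e2 := Finset.orderEmbOfFin_unique (f := fun v : Fin (((List.finRange m).filter
          fun t => !decide (t ∈ L)).length) => σ ⟨m - 1 - v.val, hkb v⟩) hc ?_ ?_
    · rw [e1, e2]
    · intro v
      show σ ⟨m - 1 - v.val, hkb v⟩ ∈ Lᶜ
      rw [Finset.mem_compl, hσmem]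
      show ¬ (m - 1 - v.val) < L.card
      have hv := v.2
      omega
    · intro v w hvw
      have hv := v.2; have hw := w.2
      show σ ⟨m - 1 - v.val, hkb v⟩ < σ ⟨m - 1 - w.val, hkb w⟩
      refine hσdec ⟨m - 1 - w.val, hkb w⟩ ⟨m - 1 - v.val, hkb v⟩ ?_ ?_
      · show L.card ≤ m - 1 - w.val; omega
      · exact Fin.mk_lt_mk.2 (by omega)
    · intro v
      have h2 : ((List.finRange m).filter fun t => !decide (t ∈ L)).get v
          ∈ ((List.finRange m).filter fun t => !decide (t ∈ L)).toFinset :=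
        List.mem_toFinset.2 (by rw [List.get_eq_getElem]; exact List.getElem_mem _)
      rw [hl2fin] at h2
      exact h2
    · intro v w hvw
      rw [List.pairwise_iff_get] at hl2sorted
      exact hl2sorted _ _ hvw
  -- put together
  apply List.ext_getElem
  · rw [List.length_map, List.length_finRange, hsl, List.length_append,
      List.length_reverse, hl1len, hl2len]
    omega
  · intro u hu1 hu2
    rw [List.length_map, List.length_finRange] at hu1
    rw [List.getElem_map]
    rw [List.getElem_of_eq hsl hu2]
    by_cases hcase : u < L.card
    · have hul : u < ((List.finRange m).filter fun t => decide (t ∈ L)).length := by omega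
      rw [List.getElem_append_left hul]
      have hthis := congrFun hf ⟨u, hcase⟩
      simp only [List.get_eq_getElem, Fin.coe_cast] at hthis
      rw [hthis]
      congr 1
      apply Fin.ext
      simp
    · have hul : ((List.finRange m).filter fun t => decide (t ∈ L)).length ≤ u := by omega
      rw [List.getElem_append_right hul, List.getElem_reverse]
      have hidx : ((List.finRange m).filter fun t => !decide (t ∈ L)).length - 1 -
          (u - ((List.finRange m).filter fun t => decide (t ∈ L)).length)
          < ((List.finRange m).filter fun t => !decide (t ∈ L)).length := by
        omega
      have hthis := congrFun hg ⟨_, hidx⟩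
      simp only [List.get_eq_getElem] at hthis
      rw [hthis]
      congr 1
      apply Fin.ext
      simp only [List.getElem_finRange, Fin.coe_cast, Fin.val_mk]
      omega

end SigmaList
/-- mixed tables of knights and louts. All optimal plays of the
mixed game divide the food as the greedy play of the all-lout game whose turn
order lists the lout turns in increasing order followed by the knight turns in
decreasing order. -/
theorem mixed_game_division {M : Type*} [Fintype M] [DecidableEq M] {m k : ℕ}
    (hm : m ≤ Fintype.card M) (P : Fin m → Fin k) (ord : Fin k → LinearOrder M)
    (L : Finset (Fin m)) (σ : Equiv.Perm (Fin m))
    (hσmem : ∀ u : Fin m, σ u ∈ L ↔ u.val < L.card)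
    (hσinc : ∀ u v : Fin m, u < v → v.val < L.card → σ u < σ v)
    (hσdec : ∀ u v : Fin m, L.card ≤ u.val → u < v → σ v < σ u)
    (big : Fin m → (Fin m → M) → (Fin m → M) → Prop)
    (hirr : ∀ t ∉ L, ∀ a : Fin m → M, Function.Injective a → ¬ big t a a)
    (htrans : ∀ t ∉ L, ∀ a b c : Fin m → M, Function.Injective a →
      Function.Injective b → Function.Injective c → big t a b → big t b c → big t a c)
    (hext : ∀ t ∉ L, ∀ a b : Fin m → M, Function.Injective a → Function.Injective b →
      KnightLT P ord (P t) a b → big t a b)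
    (b : Fin m → M) (hb : IsGreedy (P ∘ σ) ord b)
    (a : Fin m → M)
    (ha : OptimalPlay (fun t => if t ∈ L then LoutLT P ord (P t) else big t) a) :
    ∀ i : Fin k, plate P a i = plate (P ∘ σ) b i := by
  obtain ⟨s, hs, haeq⟩ := ha
  subst haeq
  intro i
  have hmain := main_induction hm P ord L big hext s hs m 0 [] List.nodup_nil rfl
    (by omega) i
  rw [splate_zero] at hmain
  have hnil : (Finset.univ \ ([] : List M).toFinset) = (Finset.univ : Finset M) := by simp
  rw [hnil] at hmain
  rw [hmain, plate_eq_lplate (P ∘ σ) b i]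
  have hturn : List.map (P ∘ σ) (List.finRange m) = List.map P (schedList L 0) := by
    rw [← sigma_list L σ hσmem hσinc hσdec, ← List.map_map]
  have hgreedy : List.map b (List.finRange m)
      = gr ord (List.map (P ∘ σ) (List.finRange m)) Finset.univ := by
    have hg := greedy_list_eq hm (P ∘ σ) ord b hb m 0 (by omega)
    rw [List.drop_zero] at hg
    rw [hg]
    congr 1
    ext z
    simp
  rw [hgreedy, hturn]
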